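/- arXiv:1707.00831 — 2 statements merged into one kernel-verified Lean document; each statement's English description precedes it below -/
import Mathlib

section
/- Let p be a prime and α ≥ 1 an integer such that either p is odd, or p = 2 and α ≥ 2. Then for every integer n ≥ 1, p^{2α} divides f_p(p^α · n) − f_p(p^α · (n−1)) · f_p(p^α). -/
/-- `fp p n` is the product of all integers `i` with `1 ≤ i ≤ n` and `p ∤ i`. -/
def fp (p n : ℕ) : ℕ := ∏ i ∈ (Finset.Icc 1 n).filter (fun i => ¬ p ∣ i), i

/-!
Write `m = p ^ α` and `c = m (n - 1)`. As `p ∣ c`, the factors of `f_p(c + m)` beyond `c` are the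
`c + j` with `j ∈ [1, m]` prime to `p`, so the difference equals `f_p(c) (∏ (c + j) - ∏ j)`.
To first order in `c`, `∏ (c + j) - ∏ j ≡ c ∑_j ∏_{k ≠ j} k` modulo `c ^ 2`, and `m` divides the
sum: modulo `m` the terms of `j` and `m - j` cancel, and the hypothesis on `(p, α)` is exactly what
rules out a fixed point `2 j = m` of this pairing.
-/

open Finset

section ProdErase

variable {ι R : Type*} [CommRing R] [DecidableEq ι]

lemma sq_dvd_prod_add_sub_prod_sub_sum (s : Finset ι) (f : ι → R) (c : R) :
    c ^ 2 ∣ ∏ i ∈ s, (c + f i) - ∏ i ∈ s, f i - c * ∑ i ∈ s, ∏ j ∈ s.erase i, f j := by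
  induction s using Finset.induction with
  | empty => simp
  | @insert a s ha ih =>
    obtain ⟨d, hd⟩ := ih
    have hsum : ∑ i ∈ insert a s, ∏ j ∈ (insert a s).erase i, f j
        = ∏ j ∈ s, f j + f a * ∑ i ∈ s, ∏ j ∈ s.erase i, f j := by
      rw [sum_insert ha, erase_insert ha, mul_sum]
      refine congrArg _ (sum_congr rfl fun i hi => ?_)
      rw [erase_insert_of_ne (ne_of_mem_of_not_mem hi ha).symm,
        prod_insert fun h => ha (mem_of_mem_erase h)]
    rw [prod_insert ha, prod_insert ha, hsum]
    exact ⟨∑ i ∈ s, ∏ j ∈ s.erase i, f j + (c + f a) * d, by linear_combination (c + f a) * hd⟩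

lemma sq_dvd_prod_add_sub_prod {a c : R} (s : Finset ι) (f : ι → R) (hac : a ∣ c)
    (hsum : a ∣ ∑ i ∈ s, ∏ j ∈ s.erase i, f j) :
    a ^ 2 ∣ ∏ i ∈ s, (c + f i) - ∏ i ∈ s, f i := by
  have hc2 : a ^ 2 ∣ c ^ 2 := pow_dvd_pow_of_dvd hac 2
  have hcs : a ^ 2 ∣ c * ∑ i ∈ s, ∏ j ∈ s.erase i, f j := sq a ▸ mul_dvd_mul hac hsum
  simpa using dvd_add (hc2.trans (sq_dvd_prod_add_sub_prod_sub_sum s f c)) hcs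

lemma sum_prod_erase_eq_zero_of_involution (s : Finset ι) (f : ι → R) (σ : ι → ι)
    (hσs : ∀ i ∈ s, σ i ∈ s) (hσσ : ∀ i ∈ s, σ (σ i) = i) (hσne : ∀ i ∈ s, σ i ≠ i)
    (hfσ : ∀ i ∈ s, f (σ i) = -f i) (hreg : ∀ i ∈ s, IsLeftRegular (f i)) :
    ∑ i ∈ s, ∏ j ∈ s.erase i, f j = 0 := by
  refine sum_involution (fun i _ => σ i) (fun i hi => hreg i hi ?_) (fun i hi _ => hσne i hi)
    hσs hσσ
  -- `f i = -f (σ i)` times either product is `±∏ s f`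
  have := mul_prod_erase s f (hσs i hi)
  rw [hfσ i hi] at this
  linear_combination (mul_prod_erase s f hi) - this

end ProdErase

def fpFactors (p n : ℕ) : Finset ℕ := (Icc 1 n).filter (fun i => ¬ p ∣ i)

lemma fp_eq_prod_fpFactors (p n : ℕ) : fp p n = ∏ i ∈ fpFactors p n, i := rfl

lemma mem_fpFactors {p n i : ℕ} : i ∈ fpFactors p n ↔ 1 ≤ i ∧ i ≤ n ∧ ¬ p ∣ i := by
  simp [fpFactors, and_assoc]

lemma fp_eq_prod_Ioc (p n : ℕ) : fp p n = ∏ i ∈ Ioc 0 n, if p ∣ i then 1 else i := by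
  simp only [fp, prod_filter, ite_not, ← Icc_add_one_left_eq_Ioc, zero_add]

lemma fp_add_of_dvd {p c : ℕ} (hc : p ∣ c) (m : ℕ) :
    fp p (c + m) = fp p c * ∏ i ∈ fpFactors p m, (c + i) := by
  have hshift : Ioc c (c + m) = (Ioc 0 m).map (addLeftEmbedding c) := by
    simp [map_add_left_Ioc]
  rw [fp_eq_prod_Ioc, fp_eq_prod_Ioc, ← prod_Ioc_consecutive _ (Nat.zero_le c) le_self_add,
    hshift, prod_map, fpFactors, prod_filter]
  simp only [addLeftEmbedding_apply, Nat.dvd_add_right hc, ite_not, ← Icc_add_one_left_eq_Ioc,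
    zero_add]

lemma two_mul_ne_prime_pow {p α j : ℕ} (hp : p.Prime) (h : p ≠ 2 ∨ 2 ≤ α) (hj : ¬ p ∣ j) :
    2 * j ≠ p ^ α := by
  intro hjα
  obtain rfl | hα := Nat.eq_zero_or_pos α
  · simp at hjα
  have hp2 : p = 2 := by
    have hpj : p ∣ 2 * j := hjα ▸ dvd_pow_self p hα.ne'
    rcases hp.dvd_mul.mp hpj with h2 | h2
    · exact (Nat.prime_dvd_prime_iff_eq hp Nat.prime_two).mp h2
    · exact (hj h2).elim
  subst hp2
  have h4 : 2 * 2 ∣ 2 * j := hjα ▸ (pow_dvd_pow 2 (h.resolve_left (by decide)))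
  exact hj (Nat.dvd_of_mul_dvd_mul_left two_pos h4)

lemma prime_pow_dvd_sum_prod_erase {p α : ℕ} (hp : p.Prime) (hα : 1 ≤ α) (h : p ≠ 2 ∨ 2 ≤ α) :
    ((p ^ α : ℕ) : ℤ) ∣ ∑ i ∈ fpFactors p (p ^ α), ∏ j ∈ (fpFactors p (p ^ α)).erase i, (j : ℤ) := by
  set m := p ^ α
  have hpm : p ∣ m := dvd_pow_self p (by omega)
  have hlt : ∀ {i}, i ∈ fpFactors p m → i < m := fun hi =>
    (mem_fpFactors.1 hi).2.1.lt_of_ne fun h => (mem_fpFactors.1 hi).2.2 (h ▸ hpm)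
  have hsub : ∀ {i}, i ∈ fpFactors p m → m - i ∈ fpFactors p m := fun {i} hi => by
    obtain ⟨-, hi_le, hpi⟩ := mem_fpFactors.1 hi
    have := hlt hi
    refine mem_fpFactors.2 ⟨by omega, by omega, fun hd => hpi ?_⟩
    simpa [Nat.sub_sub_self hi_le] using Nat.dvd_sub hpm hd
  have : NeZero m := ⟨(pow_pos hp.pos α).ne'⟩
  rw [← ZMod.intCast_zmod_eq_zero_iff_dvd]
  push_cast
  refine sum_prod_erase_eq_zero_of_involution _ _ (m - ·) (fun i hi => hsub hi)
    (fun i hi => Nat.sub_sub_self (hlt hi).le) (fun i hi => ?_) (fun i hi => ?_) (fun i hi => ?_)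
  · have h2i : 2 * i ≠ m := two_mul_ne_prime_pow hp h (mem_fpFactors.1 hi).2.2
    have := hlt hi
    omega
  · simp [Nat.cast_sub (hlt hi).le]
  · have hcop : i.Coprime m := (hp.coprime_iff_not_dvd.2 (mem_fpFactors.1 hi).2.2).symm.pow_right α
    exact ((ZMod.isUnit_iff_coprime i m).2 hcop).isRegular.left

theorem fp_inductive_step (p α : ℕ) (hp : p.Prime) (hα : 1 ≤ α)
    (h : p ≠ 2 ∨ 2 ≤ α) (n : ℕ) (hn : 1 ≤ n) :
    (p : ℤ) ^ (2 * α) ∣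
      (fp p (p ^ α * n) : ℤ) - (fp p (p ^ α * (n - 1)) : ℤ) * (fp p (p ^ α) : ℤ) := by
  obtain ⟨k, rfl⟩ := Nat.exists_eq_add_of_le' hn
  have hpc : p ∣ p ^ α * k := (dvd_pow_self p (by omega)).mul_right k
  have hprod := sq_dvd_prod_add_sub_prod _ (fun i : ℕ => (i : ℤ))
    (Int.natCast_dvd_natCast.2 (dvd_mul_right (p ^ α) k)) (prime_pow_dvd_sum_prod_erase hp hα h)
  rw [Nat.add_sub_cancel, mul_add_one, fp_add_of_dvd hpc, pow_mul', fp_eq_prod_fpFactors,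
    fp_eq_prod_fpFactors]
  push_cast at hprod ⊢
  rw [← mul_sub]
  exact dvd_mul_of_dvd_right hprod _
end

section
/- For every integer m ≥ 1 and every integer τ ≥ 0, m² divides ∑_{d ∣ m} μ(m/d) · (−1)^{dτ} · C(d(τ+1) − 1, d − 1), where the sum is over the positive divisors d of m; equivalently, the rational number (1/m²) ∑_{d ∣ m} μ(m/d)(−1)^{dτ} C(d(τ+1)−1, d−1) is an integer. -/
/-!
Write `A(d) = (-1)^(dτ) C(d(τ+1)-1, d-1)`. Pairing each divisor `e` of `m` prime to `p` with `pe`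
turns `∑_{e ∣ m} μ(e) A(m/e)` into a combination of differences `A(np) - A(n)` with
`v_p(n) = v_p(m) - 1`, so it suffices to show `A(np) ≡ A(n) mod p^(2(v_p(n)+1))`.

For `N = np`, sorting the factors of `(N-1)! C(N(τ+1)-1, N-1) = ∏_{0<j<N} (Nτ + j)` by divisibility
by `p` gives `P · C(N(τ+1)-1, N-1) = Q · C(n(τ+1)-1, n-1)`, where `P = ∏ j` and `Q = ∏ (Nτ + j)`
run over the `0 < j < N` prime to `p`. Modulo `p^(2(v_p(n)+1))`, which divides `N²`, the `j` are
units and `(Nτ + j)(Nτ + N - j) ≡ j (N - j)`, so pairing `j` with `N - j` gives `Q ≡ P`. The only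
fixed point of the pairing, `j = n` for `p = 2` and odd `n`, contributes the factor
`2τ + 1 ≡ (-1)^τ mod 4`, which is exactly the change of sign.
-/

open Finset Nat ArithmeticFunction
open scoped ArithmeticFunction.Moebius

theorem Int.natCast_dvd_of_forall_prime_pow_dvd {m : ℕ} {x : ℤ} (hm : m ≠ 0)
    (h : ∀ p : ℕ, p.Prime → (p : ℤ) ^ m.factorization p ∣ x) : (m : ℤ) ∣ x := by
  rw [Int.natCast_dvd, Nat.dvd_iff_prime_pow_dvd_dvd]
  intro p j hp hpj
  have hle := (hp.pow_dvd_iff_le_factorization hm).mp hpj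
  exact Int.natCast_dvd.mp (by push_cast; exact (pow_dvd_pow _ hle).trans (h p hp))

theorem sum_divisors_moebius_smul_prime_pow_mul {M : Type*} [AddCommGroup M] {p a r : ℕ}
    (hp : p.Prime) (ha : a ≠ 0) (hr : ¬p ∣ r) (g : ℕ → M) :
    ∑ e ∈ (p ^ a * r).divisors, μ e • g e = ∑ e ∈ r.divisors, μ e • (g e - g (p * e)) := by
  have hcop : (p ^ a).Coprime r := Nat.Coprime.pow_left a ((hp.coprime_iff_not_dvd).mpr hr)
  rw [Nat.divisors_mul, Finset.mul_def, sum_image hcop.mul_injOn_divisors, sum_product_right]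
  refine sum_congr rfl fun e he => ?_
  have hpe : p.Coprime e :=
    (hp.coprime_iff_not_dvd).mpr fun h => hr (h.trans (Nat.dvd_of_mem_divisors he))
  have hμ : μ (p * e) = -μ e := by
    rw [isMultiplicative_moebius.map_mul_of_coprime hpe, moebius_apply_prime hp, neg_one_mul]
  rw [sum_eq_add 1 p hp.one_lt.ne, one_mul, hμ, neg_smul, smul_sub, sub_eq_add_neg]
  · intro i hi ⟨hi1, hip⟩
    obtain ⟨t, -, rfl⟩ := (Nat.mem_divisors_prime_pow hp a).mp hi
    have ht : 2 ≤ t := by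
      rcases t with _ | _ | t
      · simp at hi1
      · simp at hip
      · omega
    rw [moebius_eq_zero_of_not_squarefree, zero_smul]
    intro hsq
    refine hp.not_isUnit (hsq p ?_)
    exact (pow_two p ▸ pow_dvd_pow p ht).trans (dvd_mul_right _ _)
  · exact fun h => absurd (Nat.one_mem_divisors.mpr (pow_ne_zero a hp.ne_zero)) h
  · exact fun h => absurd (Nat.mem_divisors.mpr ⟨dvd_pow_self p ha, pow_ne_zero a hp.ne_zero⟩) h

theorem prime_pow_dvd_sum_moebius {f : ℕ → ℤ} {p k : ℕ} (hp : p.Prime)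
    (hf : ∀ n, (p : ℤ) ^ (k * (n.factorization p + 1)) ∣ f (n * p) - f n) (m : ℕ) :
    (p : ℤ) ^ (k * m.factorization p) ∣ ∑ e ∈ m.divisors, μ e * f (m / e) := by
  rcases eq_or_ne m 0 with rfl | hm
  · simp
  set a := m.factorization p
  rcases eq_or_ne a 0 with ha | ha
  · simp [ha]
  have hr : ¬p ∣ m / p ^ a := Nat.not_dvd_ordCompl hp hm
  rw [← Nat.ordProj_mul_ordCompl_eq_self m p]
  have hsum := sum_divisors_moebius_smul_prime_pow_mul hp ha hr fun e => f (p ^ a * (m / p ^ a) / e)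
  simp only [smul_eq_mul] at hsum
  rw [hsum]
  refine dvd_sum fun e he => dvd_mul_of_dvd_right ?_ _
  obtain ⟨s, hs⟩ := Nat.dvd_of_mem_divisors he
  have he : 0 < e := Nat.pos_of_mem_divisors he
  set n := p ^ (a - 1) * s
  have hn : n ≠ 0 := mul_ne_zero (pow_ne_zero _ hp.ne_zero) (by rintro rfl; simp_all)
  have hmn : p ^ a * (m / p ^ a) = e * (n * p) := by
    rw [hs, ← pow_sub_one_mul ha]; ring
  have hdiv : e * (n * p) / (p * e) = n := by
    rw [show e * (n * p) = n * (p * e) by ring, Nat.mul_div_cancel _ (Nat.mul_pos hp.pos he)]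
  rw [hmn, Nat.mul_div_cancel_left _ he, hdiv]
  have hle : a - 1 ≤ n.factorization p :=
    (hp.pow_dvd_iff_le_factorization hn).mp (dvd_mul_right _ _)
  exact (pow_dvd_pow _ (Nat.mul_le_mul_left k (by omega))).trans (hf n)

theorem pow_dvd_sum_moebius_of_prime_pow_dvd_sub {f : ℕ → ℤ} {k : ℕ}
    (hf : ∀ p n : ℕ, p.Prime → (p : ℤ) ^ (k * (n.factorization p + 1)) ∣ f (n * p) - f n)
    (m : ℕ) : (m : ℤ) ^ k ∣ ∑ d ∈ m.divisors, μ (m / d) * f d := by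
  rcases eq_or_ne m 0 with rfl | hm
  · simp
  have hswap : ∑ d ∈ m.divisors, μ (m / d) * f d = ∑ e ∈ m.divisors, μ e * f (m / e) := by
    rw [← Nat.sum_div_divisors m (fun e => μ e * f (m / e))]
    exact sum_congr rfl fun d hd => by rw [Nat.div_div_self (Nat.dvd_of_mem_divisors hd) hm]
  rw [hswap, ← Nat.cast_pow]
  refine Int.natCast_dvd_of_forall_prime_pow_dvd (pow_ne_zero k hm) fun p hp => ?_
  rw [Nat.factorization_pow, Finsupp.smul_apply, smul_eq_mul]
  exact prime_pow_dvd_sum_moebius hp (hf p · hp) m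

theorem Finset.prod_Ico_one_add (a k : ℕ) :
    ∏ j ∈ Ico 1 k, (a + j) = (k - 1)! * (a + k - 1).choose (k - 1) := by
  cases k with
  | zero => simp
  | succ k =>
    rw [prod_Ico_eq_prod_range, add_tsub_cancel_right, ← add_assoc, add_tsub_cancel_right,
      ← Nat.ascFactorial_eq_factorial_mul_choose, Nat.ascFactorial_eq_prod_range]
    simp only [add_assoc, add_comm 1]

theorem Finset.prod_Ico_filter_dvd {M : Type*} [CommMonoid M] (f : ℕ → M) {p : ℕ} (hp : 0 < p)
    (n : ℕ) : ∏ j ∈ Ico 1 (n * p) with p ∣ j, f j = ∏ i ∈ Ico 1 n, f (p * i) := by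
  have himage : {j ∈ Ico 1 (n * p) | p ∣ j} = (Ico 1 n).image (p * ·) := by
    ext j
    simp only [mem_filter, mem_Ico, mem_image]
    constructor
    · rintro ⟨⟨h1, h2⟩, i, rfl⟩
      refine ⟨i, ⟨Nat.pos_of_mul_pos_left h1, ?_⟩, rfl⟩
      exact Nat.lt_of_mul_lt_mul_left (a := p) (by rwa [mul_comm n] at h2)
    · rintro ⟨i, ⟨h1, h2⟩, rfl⟩
      exact ⟨⟨Nat.mul_pos hp h1, by rw [mul_comm n]; exact Nat.mul_lt_mul_of_pos_left h2 hp⟩,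
        dvd_mul_right p i⟩
  rw [himage, prod_image fun a _ b _ h => Nat.eq_of_mul_eq_mul_left hp h]

theorem prod_not_dvd_mul_choose {p : ℕ} (hp : 0 < p) (n τ : ℕ) :
    (∏ j ∈ Ico 1 (n * p) with ¬p ∣ j, j) * (n * p * (τ + 1) - 1).choose (n * p - 1) =
      (∏ j ∈ Ico 1 (n * p) with ¬p ∣ j, (n * p * τ + j)) * (n * (τ + 1) - 1).choose (n - 1) := by
  have hsplit (t : ℕ) : (n * p - 1)! * (n * p * t + n * p - 1).choose (n * p - 1) =
      (∏ j ∈ Ico 1 (n * p) with ¬p ∣ j, (n * p * t + j)) *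
        (p ^ (n - 1) * ((n - 1)! * (n * t + n - 1).choose (n - 1))) := by
    have hfactor (i : ℕ) : n * p * t + p * i = p * (n * t + i) := by ring
    rw [← prod_Ico_one_add, ← prod_filter_not_mul_prod_filter _ (p ∣ ·), prod_Ico_filter_dvd _ hp]
    simp only [hfactor, prod_mul_distrib, prod_const, card_Ico, prod_Ico_one_add]
  have hfact := hsplit 0
  simp only [mul_zero, zero_add, choose_self, mul_one] at hfact
  have hK : 0 < p ^ (n - 1) * (n - 1)! := by positivity
  apply Nat.eq_of_mul_eq_mul_right hK
  calc _ = (n * p - 1)! * (n * p * τ + n * p - 1).choose (n * p - 1) := by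
        rw [hfact, mul_add_one]; ring
    _ = _ := by rw [hsplit, mul_add_one]; ring

theorem Finset.prod_eq_prod_of_involution {ι M : Type*} [CommMonoidWithZero M] {s : Finset ι}
    {f g : ι → M} (σ : ι → ι) (hσ_mem : ∀ i ∈ s, σ i ∈ s) (hσσ : ∀ i ∈ s, σ (σ i) = i)
    (hσ_ne : ∀ i ∈ s, σ i ≠ i) (hfg : ∀ i ∈ s, f i * f (σ i) = g i * g (σ i))
    (hg : ∀ i ∈ s, IsUnit (g i)) : ∏ i ∈ s, f i = ∏ i ∈ s, g i := by
  have hquot : ∏ i ∈ s, f i * Ring.inverse (g i) = 1 := by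
    refine prod_involution (fun i _ => σ i) (fun i hi => ?_) (fun i hi _ => hσ_ne i hi)
      hσ_mem hσσ
    rw [mul_mul_mul_comm, hfg i hi, ← Ring.mul_inverse_rev, mul_comm (g (σ i)),
      Ring.mul_inverse_cancel _ ((hg i hi).mul (hg _ (hσ_mem i hi)))]
  calc ∏ i ∈ s, f i = ∏ i ∈ s, (f i * Ring.inverse (g i)) * g i :=
        prod_congr rfl fun i hi => by rw [mul_assoc, Ring.inverse_mul_cancel _ (hg i hi), mul_one]
    _ = ∏ i ∈ s, g i := by rw [prod_mul_distrib, hquot, one_mul]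

theorem prod_add_eq_prod_of_sub_mem {R : Type*} [CommRing R] {N : ℕ} {s : Finset ℕ}
    (hN : (N : R) ^ 2 = 0) (hs : ∀ j ∈ s, j ≤ N ∧ N - j ∈ s ∧ N - j ≠ j)
    (hunit : ∀ j ∈ s, IsUnit (j : R)) (τ : ℕ) :
    ∏ j ∈ s, ((N * τ + j : ℕ) : R) = ∏ j ∈ s, (j : R) := by
  refine prod_eq_prod_of_involution (N - ·) (fun j hj => (hs j hj).2.1)
    (fun j hj => Nat.sub_sub_self (hs j hj).1) (fun j hj => (hs j hj).2.2) (fun j hj => ?_) hunit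
  push_cast [Nat.cast_sub (hs j hj).1]
  linear_combination ((τ : R) ^ 2 + τ) * hN

theorem two_mul_add_one_eq_neg_one_pow {R : Type*} [CommRing R] (h4 : (4 : R) = 0) (τ : ℕ) :
    2 * τ + 1 = (-1 : R) ^ τ := by
  induction τ with
  | zero => simp
  | succ τ ih =>
    rw [pow_succ, ← ih]
    push_cast
    linear_combination ((τ : R) + 1) * h4

theorem sub_mem_Ico_filter_not_dvd {p n j : ℕ} (hj : j ∈ {j ∈ Ico 1 (n * p) | ¬p ∣ j}) :
    j ≤ n * p ∧ n * p - j ∈ {j ∈ Ico 1 (n * p) | ¬p ∣ j} := by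
  simp only [mem_filter, mem_Ico] at hj ⊢
  refine ⟨by omega, ⟨by omega, by omega⟩, fun hdvd => hj.2 ?_⟩
  simpa [Nat.sub_sub_self hj.1.2.le] using Nat.dvd_sub (dvd_mul_left p n) hdvd

theorem neg_one_pow_mul_prod_add_eq {R : Type*} [CommRing R] {p n : ℕ} (hp : p.Prime)
    (hN : ((n * p : ℕ) : R) ^ 2 = 0)
    (hunit : ∀ j ∈ {j ∈ Ico 1 (n * p) | ¬p ∣ j}, IsUnit (j : R)) (τ : ℕ) :
    (-1) ^ (n * p * τ) * ∏ j ∈ Ico 1 (n * p) with ¬p ∣ j, ((n * p * τ + j : ℕ) : R) =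
      (-1) ^ (n * τ) * ∏ j ∈ Ico 1 (n * p) with ¬p ∣ j, (j : R) := by
  set S := {j ∈ Ico 1 (n * p) | ¬p ∣ j}
  by_cases hfix : p = 2 ∧ Odd n
  · obtain ⟨rfl, hn⟩ := hfix
    have hnS : n ∈ S := by
      simp only [S, mem_filter, mem_Ico]
      have hn0 := hn.pos
      exact ⟨⟨hn0, by omega⟩, by simpa [← even_iff_two_dvd] using hn⟩
    have h4 : (4 : R) = 0 := by
      refine ((hunit n hnS).pow 2).mul_left_eq_zero.mp ?_
      rw [← hN]
      push_cast
      ring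
    have hrest : ∀ j ∈ S.erase n, j ≤ n * 2 ∧ n * 2 - j ∈ S.erase n ∧ n * 2 - j ≠ j := by
      intro j hj
      obtain ⟨hjn, hjS⟩ := mem_erase.mp hj
      obtain ⟨hle, hsub⟩ := sub_mem_Ico_filter_not_dvd hjS
      exact ⟨hle, mem_erase.mpr ⟨by omega, hsub⟩, by omega⟩
    rw [← insert_erase hnS, prod_insert (notMem_erase n S), prod_insert (notMem_erase n S),
      prod_add_eq_prod_of_sub_mem hN hrest (fun j hj => hunit j (mem_of_mem_erase hj)),
      (even_two.mul_left n |>.mul_right τ).neg_one_pow, pow_mul, hn.neg_one_pow,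
      ← two_mul_add_one_eq_neg_one_pow h4]
    push_cast
    ring
  · have hsign : (-1 : R) ^ (n * p * τ) = (-1) ^ (n * τ) := by
      rw [mul_right_comm]
      rcases Nat.even_or_odd (n * τ) with heven | hodd
      · rw [(heven.mul_right p).neg_one_pow, heven.neg_one_pow]
      · have hp_odd : Odd p := hp.odd_of_ne_two fun h => hfix ⟨h, hodd.of_mul_left⟩
        rw [(hodd.mul hp_odd).neg_one_pow, hodd.neg_one_pow]
    have hfree : ∀ j ∈ S, j ≤ n * p ∧ n * p - j ∈ S ∧ n * p - j ≠ j := by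
      intro j hj
      obtain ⟨hle, hsub⟩ := sub_mem_Ico_filter_not_dvd hj
      refine ⟨hle, hsub, fun heq => (mem_filter.mp hj).2 ?_⟩
      have htwice : 2 * j = n * p := by omega
      rcases not_and_or.mp hfix with hp2 | hn
      · have hcop : Nat.Coprime p 2 := (Nat.coprime_primes hp prime_two).mpr hp2
        exact hcop.dvd_of_dvd_mul_left (htwice ▸ dvd_mul_left p n)
      · obtain ⟨k, rfl⟩ := Nat.not_odd_iff_even.mp hn
        exact ⟨k, by linarith⟩
    rw [hsign, prod_add_eq_prod_of_sub_mem hN hfree hunit]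

def framedBinom (τ d : ℕ) : ℤ := (-1) ^ (d * τ) * (d * (τ + 1) - 1).choose (d - 1)

theorem prime_pow_dvd_framedBinom_mul_sub {p : ℕ} (hp : p.Prime) (τ n : ℕ) :
    (p : ℤ) ^ (2 * (n.factorization p + 1)) ∣ framedBinom τ (n * p) - framedBinom τ n := by
  set q := p ^ (2 * (n.factorization p + 1)) with hq
  suffices h : ((framedBinom τ (n * p) - framedBinom τ n : ℤ) : ZMod q) = 0 by
    exact_mod_cast (ZMod.intCast_zmod_eq_zero_iff_dvd _ q).mp h
  have hunit : ∀ j ∈ {j ∈ Ico 1 (n * p) | ¬p ∣ j}, IsUnit (j : ZMod q) := fun j hj =>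
    (ZMod.isUnit_iff_coprime j q).mpr <| Nat.Coprime.pow_right _ <|
      Nat.coprime_comm.mp ((hp.coprime_iff_not_dvd).mpr (mem_filter.mp hj).2)
  have hN : ((n * p : ℕ) : ZMod q) ^ 2 = 0 := by
    rw [← Nat.cast_pow, ZMod.natCast_eq_zero_iff, hq, pow_mul', pow_succ]
    exact pow_dvd_pow_of_dvd (mul_dvd_mul_right (Nat.ordProj_dvd n p) p) 2
  have hchoose := congrArg (Nat.cast : ℕ → ZMod q) (prod_not_dvd_mul_choose hp.pos n τ)
  have hsign := neg_one_pow_mul_prod_add_eq hp hN hunit τ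
  refine (IsUnit.prod_iff.mpr hunit).mul_right_eq_zero.mp ?_
  unfold framedBinom
  push_cast at hchoose hsign ⊢
  linear_combination (-1 : ZMod q) ^ (n * p * τ) * hchoose +
    ((n * (τ + 1) - 1).choose (n - 1) : ZMod q) * hsign

theorem sq_dvd_moebius_sum_general (m τ : ℕ) :
    (m : ℤ) ^ 2 ∣
      ∑ d ∈ m.divisors, (ArithmeticFunction.moebius (m / d)) *
        (-1 : ℤ) ^ (d * τ) * Nat.choose (d * (τ + 1) - 1) (d - 1) := by
  simpa only [framedBinom, mul_assoc] using pow_dvd_sum_moebius_of_prime_pow_dvd_sub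
    (fun p n hp => prime_pow_dvd_framedBinom_mul_sub hp τ n) m

theorem sq_dvd_moebius_sum (m τ : ℕ) (hm : 1 ≤ m) :
    (m : ℤ) ^ 2 ∣
      ∑ d ∈ m.divisors, (ArithmeticFunction.moebius (m / d)) *
        (-1 : ℤ) ^ (d * τ) * Nat.choose (d * (τ + 1) - 1) (d - 1) :=
  sq_dvd_moebius_sum_general m τ
end
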